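/- With P_n(x) the descent polynomial over permutations of {1,1,...,n,n} and Q_n(x) the descent polynomial over permutations of {1,1,...,n,n,n+1} (and P_0 = Q_0 = 1), the following recurrence holds for all n ≥ 0: P_{n+1}(x) = (1 + nx) Q_n(x) + (1/2) x (1-x) Q_n'(x). -/

import Mathlib

/-!
Every arrangement of `{1,1,…,n+1,n+1}` arises from exactly two pairs `(w, i)`, where `w` is an
arrangement of `{1,1,…,n,n,n+1}` and a second copy of `m = n+1` is inserted at slot `i`: one pair
for each of its two copies of `m`. Inserting the maximal letter `m` into `w` keeps `des w` in the
last slot, in front of each descent bottom and in front of the copy of `m`, and raises it by one in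
the remaining slots. Hence `2 P_{n+1} = ∑_w ((d+2) x^d + (2n-d) x^(d+1))` with `d = des w`, and
`(d+2) x^d + (2n-d) x^(d+1) = 2 ((1+nx) x^d + ½ x(1-x) (x^d)')`.
-/

open Polynomial

/-- Number of descents of a word. -/
def des (l : List ℤ) : ℕ := ((l.zip l.tail).filter (fun p => p.2 < p.1)).length

/-- Type-B descents: prepend 0. -/
def desB (l : List ℤ) : ℕ := des (0 :: l)

/-- The multiset {1,1,2,2,...,n,n} as a list. -/
def baseList (n : ℕ) : List ℤ := (List.range n).flatMap (fun i => [(i : ℤ) + 1, (i : ℤ) + 1])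

/-- All distinct arrangements (multiset permutations) of a list. -/
def arrangements (l : List ℤ) : List (List ℤ) := l.permutations.dedup

/-- Descent polynomial over arrangements of `l`. -/
noncomputable def desPoly (l : List ℤ) : Polynomial ℝ :=
  ((arrangements l).map (fun w => (X : Polynomial ℝ) ^ des w)).sum

noncomputable def Ppoly (n : ℕ) : Polynomial ℝ := desPoly (baseList n)

noncomputable def Qpoly (n : ℕ) : Polynomial ℝ := desPoly (baseList n ++ [(n : ℤ) + 1])

/-- All signings of a word. -/
def signings : List ℤ → List (List ℤ)
  | [] => [[]]
  | a :: t => (signings t).flatMap (fun w => [a :: w, (-a) :: w])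

/-- All signed permutations of the multiset given by `l`. -/
def signedWords (l : List ℤ) : List (List ℤ) := (arrangements l).flatMap signings

noncomputable def SpolyB (n : ℕ) : Polynomial ℝ :=
  ((signedWords (baseList n)).map (fun w => (X : Polynomial ℝ) ^ desB w)).sum

/-- Signed permutations of {1,1,...,n,n,n+1} in which n+1 carries a plus sign. -/
def Dwords (n : ℕ) : List (List ℤ) :=
  (signedWords (baseList n ++ [(n : ℤ) + 1])).filter (fun w => ((n : ℤ) + 1) ∈ w)

noncomputable def TpolyB (n : ℕ) : Polynomial ℝ :=
  ((Dwords n).map (fun w => (X : Polynomial ℝ) ^ desB w)).sum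

def PcountZ (n : ℕ) (k : ℤ) : ℕ :=
  ((arrangements (baseList n)).filter (fun w => (des w : ℤ) = k)).length

def QcountN (n : ℕ) (k : ℕ) : ℕ :=
  ((arrangements (baseList n ++ [(n : ℤ) + 1])).filter (fun w => des w = k)).length

def ScountZ (n : ℕ) (k : ℤ) : ℕ :=
  ((signedWords (baseList n)).filter (fun w => (desB w : ℤ) = k)).length

def TcountZ (n : ℕ) (k : ℤ) : ℕ :=
  ((Dwords n).filter (fun w => (desB w : ℤ) = k)).length

lemma des_cons_cons (a b : ℤ) (t : List ℤ) :
    des (a :: b :: t) = (if b < a then 1 else 0) + des (b :: t) := by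
  simp only [des, List.tail_cons, List.zip_cons_cons, List.filter_cons]
  split <;> simp_all; omega

lemma des_cons_of_le {a m : ℤ} (h : a ≤ m) (t : List ℤ) : des (a :: m :: t) = des (m :: t) := by
  simp [des_cons_cons, h.not_gt]

section Insertion

variable (R : Type*) [CommRing R]

noncomputable def insertionSum (m : ℤ) (w : List ℤ) : R[X] :=
  ∑ i ∈ Finset.range (w.length + 1), X ^ des (w.insertIdx i m)

variable {R}

lemma insertionSum_cons (m a : ℤ) (t : List ℤ) :
    insertionSum R m (a :: t) = ∑ i ∈ Finset.range (t.length + 1), X ^ des (a :: t.insertIdx i m)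
      + X ^ des (m :: a :: t) := by
  simp [insertionSum, Finset.sum_range_succ' _ (t.length + 1)]

lemma insertionSum_cons_cons {m a : ℤ} (ha : a ≤ m) (b : ℤ) (t : List ℤ) :
    insertionSum R m (a :: b :: t) = X ^ des (m :: a :: b :: t) + X ^ des (m :: b :: t)
      + X ^ (if b < a then 1 else 0) * (insertionSum R m (b :: t) - X ^ des (m :: b :: t)) := by
  rw [insertionSum_cons, insertionSum_cons, List.length_cons, Finset.sum_range_succ']
  simp only [List.insertIdx_succ_cons, List.insertIdx_zero, des_cons_of_le ha, des_cons_cons a b,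
    pow_add, ← Finset.mul_sum]
  ring

theorem insertionSum_eq {m : ℤ} : ∀ t : List ℤ, (∀ a ∈ t, a ≤ m) →
    insertionSum R m t = ((des t : R[X]) + 1 + (t.count m : R[X])) * X ^ des t
      + ((t.length : R[X]) - (des t : R[X]) - (t.count m : R[X])) * X ^ (des t + 1)
  | [], _ => by simp [insertionSum, des]
  | [a], h => by
    have ha : a ≤ m := h a List.mem_cons_self
    rcases ha.lt_or_eq with ha | rfl
    · simp [insertionSum, Finset.sum_range_succ, ha, ha.ne, ha.not_gt, des]
      ring
    · simp [insertionSum, Finset.sum_range_succ, des]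
  | a :: b :: t, h => by
    have ha : a ≤ m := h a List.mem_cons_self
    have hb : b ≤ m := h b (by simp)
    rw [insertionSum_cons_cons ha,
      insertionSum_eq (b :: t) fun x hx => h x (List.mem_cons_of_mem a hx)]
    simp only [des_cons_cons, List.count_cons, List.length_cons, beq_iff_eq]
    split_ifs <;> first | omega | (push_cast; ring)

end Insertion

section Arrangements

variable {α : Type*}

lemma List.insertIdx_eraseIdx_of_getElem? {u : List α} {i : ℕ} {m : α} (h : u[i]? = some m) :
    (u.eraseIdx i).insertIdx i m = u := by
  obtain ⟨hi, rfl⟩ := List.getElem?_eq_some_iff.mp h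
  exact List.insertIdx_eraseIdx_getElem hi

variable [DecidableEq α]

lemma List.card_filter_getElem?_eq_count (m : α) : ∀ u : List α,
    ((Finset.range u.length).filter (fun i => u[i]? = some m)).card = u.count m
  | [] => by simp
  | a :: t => by
    rw [Finset.card_filter, List.length_cons, Finset.sum_range_succ']
    simp only [List.getElem?_cons_succ, List.getElem?_cons_zero, Option.some.injEq]
    rw [← Finset.card_filter, List.card_filter_getElem?_eq_count m t, List.count_cons]
    simp only [beq_iff_eq]

theorem List.sum_sum_insertIdx_permutations {M : Type*} [AddCommMonoid M] (l : List α) (m : α)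
    (f : List α → M) :
    ∑ w ∈ l.permutations.toFinset, ∑ i ∈ Finset.range (w.length + 1), f (w.insertIdx i m)
      = ∑ u ∈ (m :: l).permutations.toFinset, u.count m • f u := by
  simp_rw [← List.card_filter_getElem?_eq_count, ← Finset.sum_const]
  rw [Finset.sum_sigma', Finset.sum_sigma']
  refine Finset.sum_bij' (fun p _ => ⟨p.1.insertIdx p.2 m, p.2⟩)
    (fun p _ => ⟨p.1.eraseIdx p.2, p.2⟩) ?_ ?_ ?_ ?_ (fun _ _ => rfl)
  · rintro ⟨w, i⟩ hp
    simp only [Finset.mem_sigma, List.mem_toFinset, List.mem_permutations, Finset.mem_range] at hp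
    obtain ⟨hw, hi⟩ := hp
    have hi' : i ≤ w.length := Nat.lt_succ_iff.mp hi
    have hlen := List.length_insertIdx_of_le_length hi' (a := m)
    simp only [Finset.mem_sigma, List.mem_toFinset, List.mem_permutations, Finset.mem_filter,
      Finset.mem_range]
    refine ⟨(List.perm_insertIdx m w hi').trans (hw.cons m), by omega, ?_⟩
    rw [List.getElem?_eq_getElem (by omega), List.getElem_insertIdx_self]
  · rintro ⟨u, i⟩ hp
    simp only [Finset.mem_sigma, List.mem_toFinset, List.mem_permutations, Finset.mem_filter,
      Finset.mem_range] at hp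
    obtain ⟨hu, hi, hum⟩ := hp
    have hperm : u.Perm (m :: u.eraseIdx i) := by
      simpa only [List.insertIdx_eraseIdx_of_getElem? hum] using
        List.perm_insertIdx m (u.eraseIdx i) (i := i) (by rw [List.length_eraseIdx_of_lt hi]; omega)
    simp only [Finset.mem_sigma, List.mem_toFinset, List.mem_permutations, Finset.mem_range,
      List.length_eraseIdx_of_lt hi]
    exact ⟨(hperm.symm.trans hu).cons_inv, by omega⟩
  · rintro ⟨w, i⟩ -
    simp [List.eraseIdx_insertIdx_self]
  · rintro ⟨u, i⟩ hp
    simp only [Finset.mem_sigma, Finset.mem_filter] at hp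
    simp [List.insertIdx_eraseIdx_of_getElem? hp.2.2]

end Arrangements

lemma baseList_succ (n : ℕ) : baseList (n + 1) = baseList n ++ [(n : ℤ) + 1, (n : ℤ) + 1] := by
  simp [baseList, List.range_succ]

lemma length_baseList (n : ℕ) : (baseList n).length = 2 * n := by
  induction n with
  | zero => rfl
  | succ n ih => simp [baseList_succ, ih]; ring

lemma le_of_mem_baseList {n : ℕ} {a : ℤ} (h : a ∈ baseList n) : a ≤ n := by
  obtain ⟨i, hi, h⟩ := List.mem_flatMap.mp h
  simp only [List.mem_cons, List.not_mem_nil, or_false, or_self] at h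
  simp only [List.pure_def, List.bind_eq_flatMap, List.mem_flatMap, List.mem_range, List.mem_cons,
    List.not_mem_nil, or_false] at hi
  omega

lemma count_baseList_of_lt {n : ℕ} {m : ℤ} (hm : (n : ℤ) < m) : (baseList n).count m = 0 :=
  List.count_eq_zero.mpr fun h => (le_of_mem_baseList h).not_gt hm

lemma desPoly_eq_sum (l : List ℤ) : desPoly l = ∑ w ∈ l.permutations.toFinset, X ^ des w := by
  rw [desPoly, arrangements, Finset.sum, List.toFinset_val, Multiset.map_coe, Multiset.sum_coe]

lemma two_mul_Ppoly_succ (n : ℕ) :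
    2 * Ppoly (n + 1) = ∑ w ∈ (baseList n ++ [(n : ℤ) + 1]).permutations.toFinset,
      insertionSum ℝ ((n : ℤ) + 1) w := by
  have hperm : ((n + 1 : ℤ) :: (baseList n ++ [(n : ℤ) + 1])).Perm (baseList (n + 1)) := by
    rw [baseList_succ]
    exact List.perm_middle.symm.trans (by simp)
  rw [Ppoly, desPoly_eq_sum, Finset.mul_sum]
  simp only [insertionSum]
  rw [List.sum_sum_insertIdx_permutations _ _ fun u => X ^ des u,
    List.toFinset_eq_of_perm _ _ hperm.permutations]
  refine Finset.sum_congr rfl fun u hu => ?_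
  have hcount : u.count ((n : ℤ) + 1) = 2 := by
    simp [(List.mem_permutations.mp (List.mem_toFinset.mp hu)).count_eq, baseList_succ,
      count_baseList_of_lt]
  rw [hcount, two_nsmul, two_mul]

lemma insertionSum_of_perm {n : ℕ} {w : List ℤ} (hw : w.Perm (baseList n ++ [(n : ℤ) + 1])) :
    insertionSum ℝ ((n : ℤ) + 1) w
      = ((des w : ℝ[X]) + 2) * X ^ des w + (2 * (n : ℝ[X]) - (des w : ℝ[X])) * X ^ (des w + 1) := by
  have hle : ∀ a ∈ w, a ≤ (n : ℤ) + 1 := by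
    intro a ha
    rcases List.mem_append.mp (hw.mem_iff.mp ha) with h | h
    · linarith [le_of_mem_baseList h]
    · simp_all
  have hcount : w.count ((n : ℤ) + 1) = 1 := by
    simp [hw.count_eq, count_baseList_of_lt]
  have hlen : w.length = 2 * n + 1 := by
    simp [hw.length_eq, length_baseList]
  rw [insertionSum_eq w hle, hcount, hlen]
  push_cast
  ring

lemma two_mul_X_pow_recurrence (n k : ℕ) :
    ((k : ℝ[X]) + 2) * X ^ k + (2 * (n : ℝ[X]) - (k : ℝ[X])) * X ^ (k + 1)
      = 2 * ((1 + (n : ℝ[X]) * X) * X ^ k + C (1 / 2 : ℝ) * X * (1 - X) * derivative (X ^ k)) := by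
  have h2 : (2 : ℝ[X]) * C (1 / 2 : ℝ) = 1 := by
    rw [← C_ofNat, ← C_mul]; norm_num
  cases k with
  | zero => simp; ring
  | succ k =>
    rw [derivative_X_pow, C_eq_natCast]
    push_cast
    linear_combination (-(X * (1 - X) * ((k : ℝ[X]) + 1) * X ^ k)) * h2

/-- P_{n+1}(x) = (1 + nx) Qₙ(x) + ½ x (1-x) Qₙ'(x). -/
theorem stmt9 (n : ℕ) :
    Ppoly (n + 1) = (1 + (n : Polynomial ℝ) * X) * Qpoly n
      + C (1 / 2 : ℝ) * X * (1 - X) * derivative (Qpoly n) := by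
  refine mul_left_cancel₀ two_ne_zero ?_
  rw [two_mul_Ppoly_succ, Qpoly, desPoly_eq_sum, derivative_sum, Finset.mul_sum, Finset.mul_sum,
    ← Finset.sum_add_distrib, Finset.mul_sum]
  refine Finset.sum_congr rfl fun w hw => ?_
  rw [insertionSum_of_perm (List.mem_permutations.mp (List.mem_toFinset.mp hw)),
    two_mul_X_pow_recurrence]
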